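/- (Leave-one-instance-out shortcut for two-step kernel ridge regression, Setting B.) Let m ≥ 2, let K be an m×m and G a q×q symmetric positive semidefinite real matrix, Y ∈ ℝ^{m×q}, λ_d, λ_t > 0, H^k = K(K + λ_d I)⁻¹, and H^g = G(G + λ_t I)⁻¹. Fix an instance index i; let K^{(i)} be K with row i and column i deleted, Y^{(i)} be Y with row i deleted, and κ_i ∈ ℝ^{m−1} be the i-th row of K with its i-th entry deleted. Then κ_iᵀ (K^{(i)} + λ_d I)⁻¹ Y^{(i)} H^g = (H^k_{i·} Y − H^k_{ii} Y_{i·}) H^g / (1 − H^k_{ii}). -/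

import Mathlib

open Matrix

/-! Put `A = K + λ_d I` and `B = A⁻¹`, so that `H^k = I - λ_d B`. Since `B A = I`, for `x ≠ i`
we get `∑_{y ≠ i} B_{iy} A_{yx} = -B_{ii} A_{ix}`, i.e. `B_{i·}^{(i)} A^{(i)} = -B_{ii} κ_iᵀ`, hence
`κ_iᵀ (A^{(i)})⁻¹ = -B_{i·}^{(i)} / B_{ii}` and the held-out prediction is
`Y_{i·} - (B Y)_{i·} / B_{ii}`. Substituting `B = (I - H^k) / λ_d` gives the claim; `H^g` only
multiplies on the right. -/

namespace Matrix

variable {n o p R : Type*} [Fintype n] [DecidableEq n]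

theorem vecMul_submatrix_subtype_ne [Ring R] (v : n → R) (Y : Matrix n o R) (i : n)
    (c : p → o) :
    (fun x : {x // x ≠ i} => v x) ᵥ* Y.submatrix Subtype.val c
      = fun j => (v ᵥ* Y) (c j) - v i * Y i (c j) := by
  funext j
  simp only [vecMul, dotProduct, submatrix_apply, Fintype.sum_eq_add_sum_subtype_ne _ i]
  abel

theorem row_vecMul_submatrix_subtype_ne_of_mul_eq_one [Ring R] {A B : Matrix n n R}
    (hBA : B * A = 1) (i : n) :
    (fun x : {x // x ≠ i} => B i x) ᵥ* A.submatrix Subtype.val Subtype.val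
      = -B i i • fun x : {x // x ≠ i} => A i x := by
  rw [vecMul_submatrix_subtype_ne, ← mul_apply_eq_vecMul, hBA]
  funext x
  simp [one_apply_ne x.2.symm]

theorem vecMul_inv_submatrix_subtype_ne [Field R] {A : Matrix n n R} (hA : IsUnit A.det)
    (i : n)
    (hAi : IsUnit (A.submatrix Subtype.val Subtype.val : Matrix {x // x ≠ i} {x // x ≠ i} R).det)
    (hii : A⁻¹ i i ≠ 0) :
    (fun x : {x // x ≠ i} => A i x) ᵥ* (A.submatrix Subtype.val Subtype.val)⁻¹
      = -(A⁻¹ i i)⁻¹ • fun x : {x // x ≠ i} => A⁻¹ i x := by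
  have hrow := row_vecMul_submatrix_subtype_ne_of_mul_eq_one (nonsing_inv_mul A hA) i
  have hA_row : (fun x : {x // x ≠ i} => A i x)
      = -(A⁻¹ i i)⁻¹ •
          ((fun x : {x // x ≠ i} => A⁻¹ i x) ᵥ* A.submatrix Subtype.val Subtype.val) := by
    rw [hrow, smul_smul, neg_mul_neg, inv_mul_cancel₀ hii, one_smul]
  rw [hA_row, smul_vecMul, vecMul_vecMul, mul_nonsing_inv _ hAi, vecMul_one]

theorem vecMul_inv_submatrix_subtype_ne_mul [Field R] {A : Matrix n n R} (hA : IsUnit A.det)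
    (i : n)
    (hAi : IsUnit (A.submatrix Subtype.val Subtype.val : Matrix {x // x ≠ i} {x // x ≠ i} R).det)
    (hii : A⁻¹ i i ≠ 0) (Y : Matrix n o R) :
    (fun x : {x // x ≠ i} => A i x) ᵥ*
        ((A.submatrix Subtype.val Subtype.val : Matrix {x // x ≠ i} {x // x ≠ i} R)⁻¹ *
          (Y.submatrix Subtype.val id : Matrix {x // x ≠ i} o R))
      = Y i - (A⁻¹ i i)⁻¹ • (A⁻¹ * Y) i := by
  rw [← vecMul_vecMul, vecMul_inv_submatrix_subtype_ne hA i hAi hii, smul_vecMul,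
    vecMul_submatrix_subtype_ne]
  funext j
  simp only [id, Pi.smul_apply, Pi.sub_apply, smul_eq_mul, mul_apply_eq_vecMul]
  field_simp
  ring

theorem mul_inv_add_smul_one [CommRing R] (K : Matrix n n R) (c : R)
    (h : IsUnit (K + c • 1).det) :
    K * (K + c • 1)⁻¹ = 1 - c • (K + c • 1)⁻¹ := by
  calc K * (K + c • 1)⁻¹ = (K + c • 1 - c • 1) * (K + c • 1)⁻¹ := by
        rw [add_sub_cancel_right]
    _ = 1 - c • (K + c • 1)⁻¹ := by
        rw [sub_mul, mul_nonsing_inv _ h, smul_mul, Matrix.one_mul]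

end Matrix

theorem two_step_krr_stmt15_general {m q : ℕ}
    (K : Matrix (Fin m) (Fin m) ℝ) (hK : K.PosSemidef)
    (Y : Matrix (Fin m) (Fin q) ℝ) (ld : ℝ) (hld : 0 < ld)
    (i : Fin m)
    (Hk : Matrix (Fin m) (Fin m) ℝ) (hHk : Hk = K * (K + ld • 1)⁻¹)
    (Hg : Matrix (Fin q) (Fin q) ℝ)
    (Kdel : Matrix {x : Fin m // x ≠ i} {x : Fin m // x ≠ i} ℝ)
    (hKdel : Kdel = K.submatrix (fun x => x.val) (fun x => x.val))
    (Ydel : Matrix {x : Fin m // x ≠ i} (Fin q) ℝ)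
    (hYdel : Ydel = Y.submatrix (fun x => x.val) id)
    (κ : {x : Fin m // x ≠ i} → ℝ) (hκ : κ = fun x => K i x.val) :
    κ ᵥ* ((Kdel + ld • 1)⁻¹ * Ydel * Hg)
      = fun j => ((Hk * Y * Hg) i j - Hk i i * (Y * Hg) i j) / (1 - Hk i i) := by
  subst hHk hKdel hYdel hκ
  have hA : (K + ld • 1).PosDef := PosDef.posSemidef_add hK (PosDef.one.smul hld)
  have hAdel : K.submatrix Subtype.val Subtype.val + ld • 1
      = ((K + ld • 1).submatrix Subtype.val Subtype.val :
          Matrix {x // x ≠ i} {x // x ≠ i} ℝ) := by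
    simp [submatrix_add, submatrix_smul, submatrix_one _ Subtype.val_injective]
  have hκA : (fun x : {x // x ≠ i} => K i x) = fun x : {x // x ≠ i} => (K + ld • 1) i x := by
    funext x
    simp [one_apply_ne x.2.symm]
  have hBii : (K + ld • 1)⁻¹ i i ≠ 0 := hA.inv.diag_pos.ne'
  have hloo := vecMul_inv_submatrix_subtype_ne_mul hA.det_pos.ne'.isUnit i
    (hA.submatrix Subtype.val_injective).det_pos.ne'.isUnit hBii Y
  rw [hAdel, hκA, ← vecMul_vecMul, hloo, mul_inv_add_smul_one K ld hA.det_pos.ne'.isUnit]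
  funext j
  simp only [Matrix.sub_mul, Matrix.one_mul, Matrix.smul_mul, Matrix.sub_apply, Matrix.smul_apply,
    one_apply_eq, smul_eq_mul, sub_vecMul, smul_vecMul, ← mul_apply_eq_vecMul, Pi.sub_apply,
    Pi.smul_apply]
  field_simp
  ring

/-- leave-one-instance-out shortcut for two-step KRR, Setting B:
training the two-step model on the `m−1` instances other than `i` and predicting
at instance `i` across all `q` tasks gives
`(H^k_{i·} Y − H^k_{ii} Y_{i·}) H^g / (1 − H^k_{ii})`. -/
theorem two_step_krr_stmt15 {m q : ℕ} (hm : 2 ≤ m)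
    (K : Matrix (Fin m) (Fin m) ℝ) (hK : K.PosSemidef)
    (G : Matrix (Fin q) (Fin q) ℝ) (hG : G.PosSemidef)
    (Y : Matrix (Fin m) (Fin q) ℝ) (ld lt : ℝ) (hld : 0 < ld) (hlt : 0 < lt)
    (i : Fin m)
    (Hk : Matrix (Fin m) (Fin m) ℝ) (hHk : Hk = K * (K + ld • 1)⁻¹)
    (Hg : Matrix (Fin q) (Fin q) ℝ) (hHg : Hg = G * (G + lt • 1)⁻¹)
    (Kdel : Matrix {x : Fin m // x ≠ i} {x : Fin m // x ≠ i} ℝ)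
    (hKdel : Kdel = K.submatrix (fun x => x.val) (fun x => x.val))
    (Ydel : Matrix {x : Fin m // x ≠ i} (Fin q) ℝ)
    (hYdel : Ydel = Y.submatrix (fun x => x.val) id)
    (κ : {x : Fin m // x ≠ i} → ℝ) (hκ : κ = fun x => K i x.val) :
    κ ᵥ* ((Kdel + ld • 1)⁻¹ * Ydel * Hg)
      = fun j => ((Hk * Y * Hg) i j - Hk i i * (Y * Hg) i j) / (1 - Hk i i) :=
  two_step_krr_stmt15_general K hK Y ld hld i Hk hHk Hg Kdel hKdel Ydel hYdel κ hκ
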